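/- If a finite directed graph G is disconnected (its underlying undirected graph has more than one connected component) then N(G) = 0, equivalently Ψ(G) = 0. -/

import Mathlib

open scoped BigOperators

/-- The field of rational functions in variables indexed by `V` over `ℚ`. -/
abbrev K (V : Type) : Type := FractionRing (MvPolynomial V ℚ)

/-- The variable `x_v` seen inside the field of rational functions. -/
noncomputable def xv {V : Type} (v : V) : K V :=
  algebraMap (MvPolynomial V ℚ) (K V) (MvPolynomial.X v)

/-- `ψ_w = 1 / ∏ (x_{w_i} - x_{w_{i+1}})` for a word `w`. -/
noncomputable def psi {V : Type} (w : List V) : K V :=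
  (((w.zip w.tail).map fun p => xv p.1 - xv p.2).prod)⁻¹

/-- The word (list of vertices) associated to an enumeration `σ` of the vertex set `W`. -/
def wordOf {V : Type} (W : Finset V) (σ : Fin W.card ≃ W) : List V :=
  (List.finRange W.card).map fun i => ((σ i : W) : V)

/-- `σ` enumerates `W` in an order compatible with all edges of `E`:
the origin of every edge appears before its end. -/
def IsExt {V : Type} (W : Finset V) (E : Finset (V × V)) (σ : Fin W.card ≃ W) : Prop :=
  ∀ e ∈ E, ∃ i j : Fin W.card, i < j ∧ ((σ i : W) : V) = e.1 ∧ ((σ j : W) : V) = e.2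

instance {V : Type} [DecidableEq V] (W : Finset V) (E : Finset (V × V)) (σ : Fin W.card ≃ W) :
    Decidable (IsExt W E σ) := by unfold IsExt; exact inferInstance

/-- `Ψ(G) = Σ_{w ∈ L(G)} ψ_w`, the sum over linear extensions of the graph with
vertex set `W` and edge set `E`. -/
noncomputable def PsiG {V : Type} [DecidableEq V] (W : Finset V) (E : Finset (V × V)) : K V :=
  ∑ σ : Fin W.card ≃ W, if IsExt W E σ then psi (wordOf W σ) else 0

/-- `N(G) = Ψ(G) ⬝ ∏_{(a,b) ∈ E} (x_a - x_b)`. -/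
noncomputable def NG {V : Type} [DecidableEq V] (W : Finset V) (E : Finset (V × V)) : K V :=
  PsiG W E * ∏ e ∈ E, (xv e.1 - xv e.2)

/-- `φ(G)`, the formal sum of the linear extensions of `G` in the free abelian
group on words. -/
noncomputable def phiG {V : Type} [DecidableEq V] (W : Finset V) (E : Finset (V × V)) :
    List V →₀ ℤ :=
  ∑ σ : Fin W.card ≃ W, if IsExt W E σ then Finsupp.single (wordOf W σ) 1 else 0

/-- The graph has no directed circuit. -/
def Acyclic {V : Type} (E : Finset (V × V)) : Prop :=
  ∀ v : V, ¬ Relation.TransGen (fun a b => (a, b) ∈ E) v v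

/-- The underlying undirected simple graph of the directed graph with edge set `E`. -/
def undirected {V : Type} (E : Finset (V × V)) : SimpleGraph V :=
  SimpleGraph.fromRel fun a b => (a, b) ∈ E

/-- The cyclically-consecutive pairs of a list of vertices. -/
def cyclePairs {V : Type} [DecidableEq V] (vs : List V) : Finset (V × V) :=
  Finset.image (fun i : Fin vs.length => (vs.get i, vs.get (finRotate _ i))) Finset.univ

/-- `vs` is (the vertex list of) a cycle of the graph `E`, whose set of forward
edges (edges traversed in their graph orientation) is `HE`. -/
def IsCycle {V : Type} [DecidableEq V] (E : Finset (V × V)) (vs : List V)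
    (HE : Finset (V × V)) : Prop :=
  2 ≤ vs.length ∧ vs.Nodup ∧ HE ⊆ cyclePairs vs ∧ HE ⊆ E ∧
    ∀ p ∈ cyclePairs vs, p ∉ HE → (p.2, p.1) ∈ E

/-!
Let `r`, `s` lie in different components, and split the vertices by whether they are reachable
from `r`. No edge crosses the split, so whether a word is a linear extension depends only on its
two restrictions `u`, `v` to the sides; the words with given restrictions are exactly the shuffles
of `u` and `v`, hence `Ψ(G)` is a sum of terms `∑_{w ∈ u ⧢ v} ψ_w` with `u`, `v` nonempty.
Each of these vanishes: by induction on `|u| + |v|` and the partial fraction identity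
`1/((h-a)(a-b)) + 1/((h-b)(b-a)) = 1/((h-a)(h-b))` one gets
`∑_{w ∈ u ⧢ v} ψ_{hw} = ψ_{hu} ψ_{hv}`, and splitting off the first letter of a shuffle of
`a u` and `b v` gives `ψ_{au} ψ_{bv} (1/(a-b) + 1/(b-a)) = 0`.
-/

namespace List

variable {α : Type*}

def shuffles : List α → List α → List (List α)
  | [], v => [v]
  | a :: u, [] => [a :: u]
  | a :: u, b :: v => (shuffles u (b :: v)).map (a :: ·) ++ (shuffles (a :: u) v).map (b :: ·)
  termination_by u v => u.length + v.length

@[simp]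
theorem shuffles_nil_left (v : List α) : shuffles [] v = [v] := by
  rw [shuffles]

@[simp]
theorem shuffles_nil_right (u : List α) : shuffles u [] = [u] := by
  cases u <;> rw [shuffles]

theorem shuffles_cons_cons (a b : α) (u v : List α) :
    shuffles (a :: u) (b :: v) =
      (shuffles u (b :: v)).map (a :: ·) ++ (shuffles (a :: u) v).map (b :: ·) := by
  rw [shuffles]

theorem cons_mem_shuffles_cons_left {u v w : List α} (a : α) (h : w ∈ shuffles u v) :
    a :: w ∈ shuffles (a :: u) v := by
  cases v with
  | nil => simp_all
  | cons b v => rw [shuffles_cons_cons]; exact mem_append_left _ (mem_map_of_mem h)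

theorem cons_mem_shuffles_cons_right {u v w : List α} (b : α) (h : w ∈ shuffles u v) :
    b :: w ∈ shuffles u (b :: v) := by
  cases u with
  | nil => simp_all
  | cons a u => rw [shuffles_cons_cons]; exact mem_append_right _ (mem_map_of_mem h)

theorem mem_shuffles_filter (p : α → Bool) (w : List α) :
    w ∈ shuffles (w.filter p) (w.filter (!p ·)) := by
  induction w with
  | nil => simp
  | cons c w ih =>
    cases hc : p c
    · simpa [filter_cons, hc] using cons_mem_shuffles_cons_right c ih
    · simpa [filter_cons, hc] using cons_mem_shuffles_cons_left c ih

theorem filter_eq_of_mem_shuffles {p : α → Bool} {u v w : List α} (hw : w ∈ shuffles u v)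
    (hu : ∀ x ∈ u, p x) (hv : ∀ x ∈ v, p x = false) :
    w.filter p = u ∧ w.filter (!p ·) = v := by
  induction u, v using shuffles.induct generalizing w with
  | case1 v =>
    simp only [shuffles_nil_left, mem_singleton] at hw
    subst hw
    simp_all [filter_eq_nil_iff, filter_eq_self]
  | case2 a u =>
    simp only [shuffles_nil_right, mem_singleton] at hw
    subst hw
    simp_all [filter_eq_nil_iff, filter_eq_self]
  | case3 a u b v ih₁ ih₂ =>
    rw [shuffles_cons_cons] at hw
    rcases mem_append.1 hw with hw | hw <;> obtain ⟨w', hw', rfl⟩ := mem_map.1 hw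
    · have := ih₁ hw' (fun x hx => hu x (mem_cons_of_mem a hx)) hv
      simp_all
    · have := ih₂ hw' hu (fun x hx => hv x (mem_cons_of_mem b hx))
      simp_all

theorem mem_shuffles_iff {p : α → Bool} {u v w : List α} (hu : ∀ x ∈ u, p x)
    (hv : ∀ x ∈ v, p x = false) :
    w ∈ shuffles u v ↔ w.filter p = u ∧ w.filter (!p ·) = v :=
  ⟨fun hw => filter_eq_of_mem_shuffles hw hu hv,
    fun ⟨h₁, h₂⟩ => h₁ ▸ h₂ ▸ mem_shuffles_filter p w⟩

theorem nodup_shuffles {u v : List α} (huv : (u ++ v).Nodup) : (shuffles u v).Nodup := by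
  induction u, v using shuffles.induct with
  | case1 v => simp
  | case2 a u => simp
  | case3 a u b v ih₁ ih₂ =>
    have hab : a ≠ b := by
      rintro rfl
      simp at huv
    have h₁ : (u ++ b :: v).Nodup := (nodup_cons.1 huv).2
    have h₂ : (a :: u ++ v).Nodup := (perm_middle.nodup_iff.1 huv).of_cons
    rw [shuffles_cons_cons]
    refine (ih₁ h₁).map cons_injective |>.append ((ih₂ h₂).map cons_injective) ?_
    rintro _ hw₁ hw₂
    obtain ⟨_, -, rfl⟩ := mem_map.1 hw₁
    obtain ⟨_, -, h⟩ := mem_map.1 hw₂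
    exact hab (cons.inj h).1.symm

theorem pair_sublist_filter_iff {q : α → Bool} {a b : α} {l : List α} (ha : q a) (hb : q b) :
    [a, b] <+ l.filter q ↔ [a, b] <+ l :=
  ⟨fun h => h.trans filter_sublist, fun h => by simpa [ha, hb] using h.filter q⟩

theorem pair_sublist_iff_of_filter_eq {p : α → Bool} {l l' : List α}
    (h₁ : l.filter p = l'.filter p) (h₂ : l.filter (!p ·) = l'.filter (!p ·)) {a b : α}
    (hab : p a = p b) : [a, b] <+ l ↔ [a, b] <+ l' := by
  cases ha : p a
  · have ha' : (!p a) = true := by simp [ha]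
    have hb' : (!p b) = true := by simp [← hab, ha]
    rw [← pair_sublist_filter_iff (q := (!p ·)) ha' hb', h₂,
      pair_sublist_filter_iff (q := (!p ·)) ha' hb']
  · rw [← pair_sublist_filter_iff ha (hab ▸ ha), h₁, pair_sublist_filter_iff ha (hab ▸ ha)]

theorem perm_of_filter_eq {p : α → Bool} {l l' : List α} (h₁ : l.filter p = l'.filter p)
    (h₂ : l.filter (!p ·) = l'.filter (!p ·)) : l ~ l' :=
  (filter_append_perm p l).symm.trans (h₁ ▸ h₂ ▸ filter_append_perm p l')

theorem pair_sublist_ofFn_iff {n : ℕ} {f : Fin n → α} {a b : α} :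
    [a, b] <+ ofFn f ↔ ∃ i j, i < j ∧ f i = a ∧ f j = b := by
  have := pairwise_iff_forall_sublist (R := fun x y => ¬(x = a ∧ y = b)) (l := ofFn f)
  rw [pairwise_ofFn] at this
  by_contra h
  grind

end List

section PsiOf

open List

variable {α F : Type*} [Field F]

def psiOf (x : α → F) (w : List α) : F :=
  ((w.zip w.tail).map fun p => x p.1 - x p.2).prod⁻¹

@[simp]
theorem psiOf_singleton (x : α → F) (a : α) : psiOf x [a] = 1 := by
  simp [psiOf]

theorem psiOf_cons_cons (x : α → F) (a b : α) (w : List α) :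
    psiOf x (a :: b :: w) = (x a - x b)⁻¹ * psiOf x (b :: w) := by
  simp [psiOf, mul_comm]

variable {x : α → F}

theorem sum_psiOf_cons_shuffles (hx : x.Injective) {u v : List α} {h : α}
    (hn : (h :: (u ++ v)).Nodup) :
    ((shuffles u v).map fun w => psiOf x (h :: w)).sum = psiOf x (h :: u) * psiOf x (h :: v) := by
  induction u, v using shuffles.induct generalizing h with
  | case1 v => simp
  | case2 a u => simp
  | case3 a u b v ih₁ ih₂ =>
    have hna : (a :: (u ++ b :: v)).Nodup := (nodup_cons.1 hn).2
    have hnb : (b :: (a :: u ++ v)).Nodup := perm_middle.nodup_iff.1 (nodup_cons.1 hn).2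
    have hha : x h - x a ≠ 0 := sub_ne_zero.2 (hx.ne (by rintro rfl; simp at hn))
    have hhb : x h - x b ≠ 0 := sub_ne_zero.2 (hx.ne (by rintro rfl; simp at hn))
    have hab : x a - x b ≠ 0 := sub_ne_zero.2 (hx.ne (by rintro rfl; simp at hna))
    have key : ((x h - x a)⁻¹ - (x h - x b)⁻¹) * (x a - x b)⁻¹ =
        (x h - x a)⁻¹ * (x h - x b)⁻¹ := by
      field_simp
      ring
    simp only [shuffles_cons_cons, map_append, map_map, sum_append, Function.comp_def,
      psiOf_cons_cons x h, sum_map_mul_left, ih₁ hna, ih₂ hnb, psiOf_cons_cons x a b,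
      psiOf_cons_cons x b a, ← neg_sub (x a) (x b), inv_neg]
    linear_combination (psiOf x (a :: u) * psiOf x (b :: v)) * key

theorem sum_psiOf_shuffles_eq_zero (hx : x.Injective) {u v : List α} (hu : u ≠ [])
    (hv : v ≠ []) (hn : (u ++ v).Nodup) : ((shuffles u v).map (psiOf x)).sum = 0 := by
  obtain ⟨a, u, rfl⟩ := exists_cons_of_ne_nil hu
  obtain ⟨b, v, rfl⟩ := exists_cons_of_ne_nil hv
  have hna : (a :: (u ++ b :: v)).Nodup := hn
  have hnb : (b :: (a :: u ++ v)).Nodup := perm_middle.nodup_iff.1 hn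
  have hab : x a ≠ x b := hx.ne (by rintro rfl; simp at hna)
  simp only [shuffles_cons_cons, map_append, map_map, sum_append, Function.comp_def,
    sum_psiOf_cons_shuffles hx hna, sum_psiOf_cons_shuffles hx hnb, psiOf_cons_cons x a b,
    psiOf_cons_cons x b a, ← neg_sub (x a) (x b), inv_neg]
  ring

end PsiOf

theorem xv_injective {V : Type} : Function.Injective (xv : V → K V) :=
  (IsFractionRing.injective (MvPolynomial V ℚ) (K V)).comp MvPolynomial.X_injective

theorem psi_eq_psiOf {V : Type} : (psi : List V → K V) = psiOf xv := rfl

open Finset List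

section Words

variable {V : Type} (W : Finset V)

theorem wordOf_eq_ofFn (σ : Fin W.card ≃ W) : wordOf W σ = ofFn fun i => (σ i : V) :=
  (ofFn_eq_map).symm

theorem wordOf_injective : Function.Injective (wordOf W) := fun σ τ h =>
  Equiv.ext fun i =>
    Subtype.ext (congrFun (ofFn_injective (by simpa [wordOf_eq_ofFn] using h)) i)

theorem isExt_iff_pair_sublist (E : Finset (V × V)) (σ : Fin W.card ≃ W) :
    IsExt W E σ ↔ ∀ e ∈ E, [e.1, e.2] <+ wordOf W σ := by
  simp only [IsExt, wordOf_eq_ofFn, pair_sublist_ofFn_iff]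

variable [DecidableEq V] {W}

theorem mem_image_wordOf_iff {w : List V} :
    w ∈ univ.image (wordOf W) ↔ w.Nodup ∧ w.toFinset = W := by
  constructor
  · intro h
    obtain ⟨σ, -, rfl⟩ := mem_image.1 h
    rw [wordOf_eq_ofFn, nodup_ofFn]
    refine ⟨fun i j h => σ.injective (Subtype.ext h), Finset.ext fun x => ?_⟩
    simp only [List.mem_toFinset, mem_ofFn]
    exact ⟨fun ⟨i, hi⟩ => hi ▸ (σ i).2, fun hx => ⟨σ.symm ⟨x, hx⟩, by simp⟩⟩
  · rintro ⟨hn, rfl⟩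
    have hlen : w.toFinset.card = w.length := toFinset_card_of_nodup hn
    let σ : Fin w.toFinset.card ≃ w.toFinset :=
      (finCongr hlen).trans ((hn.getEquiv w).trans (Equiv.subtypeEquivRight fun x => by simp))
    refine mem_image.2 ⟨σ, mem_univ _, ?_⟩
    rw [wordOf_eq_ofFn, ofFn_congr hlen]
    exact ofFn_getElem

theorem PsiG_eq_sum_image_wordOf (E : Finset (V × V)) :
    PsiG W E =
      ∑ w ∈ univ.image (wordOf W), if ∀ e ∈ E, [e.1, e.2] <+ w then psi w else 0 := by
  rw [PsiG, sum_image fun σ _ τ _ h => wordOf_injective W h]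
  simp only [isExt_iff_pair_sublist]

end Words

section Split

variable {V : Type} [DecidableEq V] {W : Finset V} {p : V → Bool}

theorem filter_split_eq_toFinset_shuffles {w₀ : List V} (hw₀ : w₀ ∈ univ.image (wordOf W)) :
    {w ∈ univ.image (wordOf W) |
        (w.filter p, w.filter (!p ·)) = (w₀.filter p, w₀.filter (!p ·))} =
      (shuffles (w₀.filter p) (w₀.filter (!p ·))).toFinset := by
  ext w
  rw [Finset.mem_filter, List.mem_toFinset, Prod.mk.injEq,
    mem_shuffles_iff (fun x hx => (List.mem_filter.1 hx).2)
      (fun x hx => by simpa using (List.mem_filter.1 hx).2)]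
  refine ⟨And.right, fun h => ⟨?_, h⟩⟩
  have hperm := perm_of_filter_eq h.1 h.2
  rw [mem_image_wordOf_iff] at hw₀ ⊢
  exact ⟨hperm.nodup_iff.2 hw₀.1, (toFinset_eq_of_perm _ _ hperm).trans hw₀.2⟩

theorem PsiG_eq_zero_of_split (E : Finset (V × V)) (hE : ∀ e ∈ E, p e.1 = p e.2) {r s : V}
    (hr : r ∈ W) (hs : s ∈ W) (hpr : p r) (hps : p s = false) : PsiG W E = 0 := by
  rw [PsiG_eq_sum_image_wordOf, ← sum_fiberwise_of_maps_to
    (g := fun w => (w.filter p, w.filter (!p ·))) fun w hw => mem_image_of_mem _ hw]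
  refine sum_eq_zero fun y hy => ?_
  obtain ⟨w₀, hw₀, rfl⟩ := mem_image.1 hy
  rw [filter_split_eq_toFinset_shuffles hw₀]
  obtain ⟨hn, hW⟩ := mem_image_wordOf_iff.1 hw₀
  have hu : ∀ x ∈ w₀.filter p, p x := fun x hx => (List.mem_filter.1 hx).2
  have hv : ∀ x ∈ w₀.filter (!p ·), p x = false := fun x hx => by
    simpa using (List.mem_filter.1 hx).2
  have hcond : ∀ w ∈ (shuffles (w₀.filter p) (w₀.filter (!p ·))).toFinset,
      (∀ e ∈ E, [e.1, e.2] <+ w) ↔ ∀ e ∈ E, [e.1, e.2] <+ w₀ := fun w hw => by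
    obtain ⟨h₁, h₂⟩ := (mem_shuffles_iff hu hv).1 (List.mem_toFinset.1 hw)
    exact forall₂_congr fun e he => pair_sublist_iff_of_filter_eq h₁ h₂ (hE e he)
  have hmem : ∀ x ∈ W, x ∈ w₀ := fun x hx => List.mem_toFinset.1 (hW ▸ hx)
  have hnuv := (filter_append_perm p w₀).nodup_iff.2 hn
  rw [sum_congr rfl fun w hw => if_congr (hcond w hw) rfl rfl, sum_ite_irrel, sum_const_zero,
    List.sum_toFinset _ (nodup_shuffles hnuv), psi_eq_psiOf,
    sum_psiOf_shuffles_eq_zero xv_injective (ne_nil_of_mem (mem_filter.2 ⟨hmem r hr, hpr⟩))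
      (ne_nil_of_mem (mem_filter.2 ⟨hmem s hs, by simpa using hps⟩)) hnuv, ite_self]

end Split

theorem undirected_reachable_of_mem {V : Type} {E : Finset (V × V)} {e : V × V} (he : e ∈ E) :
    (undirected E).Reachable e.1 e.2 := by
  by_cases h : e.1 = e.2
  · exact h ▸ SimpleGraph.Reachable.refl _
  · exact (SimpleGraph.fromRel_adj _ _ _ |>.2 ⟨h, .inl he⟩).reachable

/-- if the underlying undirected graph of `E` is disconnected, then
`Ψ(G) = 0`, equivalently `N(G) = 0`. -/
theorem NG_of_disconnected (V : Type) [Fintype V] [DecidableEq V] (E : Finset (V × V))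
    (hdisc : ¬ (undirected E).Preconnected) :
    PsiG (Finset.univ : Finset V) E = 0 ∧ NG (Finset.univ : Finset V) E = 0 := by
  classical
  obtain ⟨r, s, hrs⟩ : ∃ r s, ¬ (undirected E).Reachable r s := by
    simpa [SimpleGraph.Preconnected] using hdisc
  have hPsi : PsiG (Finset.univ : Finset V) E = 0 := by
    refine PsiG_eq_zero_of_split (p := fun x => decide ((undirected E).Reachable r x)) E
      (fun e he => ?_) (mem_univ r) (mem_univ s) (by simp) (by simpa using hrs)
    have hre := undirected_reachable_of_mem he
    simp only [decide_eq_decide]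
    exact ⟨fun h => h.trans hre, fun h => h.trans hre.symm⟩
  exact ⟨hPsi, by rw [NG, hPsi, zero_mul]⟩
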